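/- The all-active policy class Π_act is an (H+1, H)-sunflower: the core Π_core = {π_0} ∪ {π_h : h ∈ [H]}, where π_0 is identically 0 and π_h(s) = 1 if and only if s ∈ S_h, together with the petal sets S_π = {s_(j,h) : h ∈ [H]} for every π ∈ Π^j_act, witnesses this. -/

import Mathlib

/-- A partial trajectory from layer `h` to layer `h'` is given by states `σ i ∈ S i` and
actions `α i` for `h ≤ i ≤ h'`; it is consistent with the policy `π` if `π` takes action
`α i` on the state `σ i` for every `h ≤ i ≤ h'`. -/
def Consistent {S : ℕ → Type} {A : Type} (π : ∀ h : ℕ, S h → A)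
    (σ : ∀ i : ℕ, S i) (α : ℕ → A) (h h' : ℕ) : Prop :=
  ∀ i : ℕ, h ≤ i → i ≤ h' → π i (σ i) = α i

/-- `π` is an `Sbar`-petal on the policy set `core` (for horizon `H`): every partial
trajectory from layer `h` to layer `h'` (with `h ≤ h' < H`, `0`-indexed) that is
consistent with `π` is either consistent with some member of `core`, or visits a state of
`Sbar` at some layer `i` with `h < i ≤ h'`.  States are recorded as pairs `⟨i, s⟩` of a
layer and a state of that layer. -/
def IsPetal (H : ℕ) {S : ℕ → Type} {A : Type} (core : Set (∀ h : ℕ, S h → A))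
    (Sbar : Set ((i : ℕ) × S i)) (π : ∀ h : ℕ, S h → A) : Prop :=
  ∀ h h' : ℕ, h ≤ h' → h' < H → ∀ (σ : ∀ i : ℕ, S i) (α : ℕ → A),
    Consistent π σ α h h' →
      (∃ π' ∈ core, Consistent π' σ α h h') ∨ (∃ i : ℕ, h < i ∧ i ≤ h' ∧ ⟨i, σ i⟩ ∈ Sbar)

/-- The policy class `P` is a `(K, D)`-sunflower: there is a core of at most `K` policies
such that every `π ∈ P` is an `S_π`-petal on the core for some set `S_π` of at most `D`
states. -/
def IsSunflower (H : ℕ) {S : ℕ → Type} {A : Type} (K D : ℕ)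
    (P : Set (∀ h : ℕ, S h → A)) : Prop :=
  ∃ core : Set (∀ h : ℕ, S h → A), core.Finite ∧ core.ncard ≤ K ∧
    ∀ π ∈ P, ∃ Sbar : Set ((i : ℕ) × S i), Sbar.Finite ∧ Sbar.ncard ≤ D ∧
      IsPetal H core Sbar π

/-- The sub-class `Π^j_act` of policies that are free on the column `j` and play `0`
(`false`) elsewhere. -/
def colActiveClass (K : ℕ) (j : Fin (K + 1)) : Set (∀ _ : ℕ, Fin (K + 1) → Bool) :=
  {π | ∃ b : ℕ → Bool, π = fun h s => if s = j then b h else false}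

/-- The all-active policy class `Π_act = ∪_j Π^j_act` over the grid state space with `K + 1`
states per layer and binary actions. -/
def allActiveClass (K : ℕ) : Set (∀ _ : ℕ, Fin (K + 1) → Bool) :=
  ⋃ j : Fin (K + 1), colActiveClass K j

/-- The core policy set `{π_0} ∪ {π_h : h < H}`. -/
def coreClass (K H : ℕ) : Set (∀ _ : ℕ, Fin K → Bool) :=
  insert (fun _ _ => false) {π | ∃ h < H, π = fun i _ => decide (i = h)}

/-!
If a trajectory consistent with `π ∈ Π^j_act` does not return to column `j` after its first
layer `h`, then `π` plays `0` on all of it except possibly at layer `h`. So it is consistent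
with `π_h` when `π` plays `1` at layer `h`, and with `π_0` otherwise; the only escape is a
visit to column `j` at a later layer, which is exactly the petal set `S_π`.
-/

open Set

theorem ncard_image_Iio_le {α : Type*} (f : ℕ → α) (n : ℕ) : (f '' Iio n).ncard ≤ n :=
  (ncard_image_le (finite_Iio n)).trans (ncard_Iio_nat n).le

theorem isPetal_of_forall_agree {H : ℕ} {S : ℕ → Type} {A : Type}
    {core : Set (∀ h : ℕ, S h → A)} {Sbar : Set ((i : ℕ) × S i)} {π : ∀ h : ℕ, S h → A}
    (hagree : ∀ h h' : ℕ, h ≤ h' → h' < H → ∀ σ : ∀ i : ℕ, S i,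
      (∀ i : ℕ, h < i → i ≤ h' → ⟨i, σ i⟩ ∉ Sbar) →
        ∃ π' ∈ core, ∀ i : ℕ, h ≤ i → i ≤ h' → π' i (σ i) = π i (σ i)) :
    IsPetal H core Sbar π := by
  intro h h' hhh' hh'H σ α hπ
  by_cases hvisit : ∃ i : ℕ, h < i ∧ i ≤ h' ∧ ⟨i, σ i⟩ ∈ Sbar
  · exact Or.inr hvisit
  · push Not at hvisit
    obtain ⟨π', hπ'core, hπ'⟩ := hagree h h' hhh' hh'H σ hvisit
    exact Or.inl ⟨π', hπ'core, fun i hi hi' => (hπ' i hi hi').trans (hπ i hi hi')⟩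

theorem isSunflower_iUnion {H : ℕ} {S : ℕ → Type} {A : Type} {K D : ℕ} {ι : Type*}
    {P : ι → Set (∀ h : ℕ, S h → A)} (core : Set (∀ h : ℕ, S h → A)) (hcore : core.Finite)
    (hcoreK : core.ncard ≤ K) (Sbar : ι → Set ((i : ℕ) × S i)) (hSbar : ∀ j, (Sbar j).Finite)
    (hSbarD : ∀ j, (Sbar j).ncard ≤ D) (hpetal : ∀ j, ∀ π ∈ P j, IsPetal H core (Sbar j) π) :
    IsSunflower H K D (⋃ j, P j) := by
  refine ⟨core, hcore, hcoreK, fun π hπ => ?_⟩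
  obtain ⟨j, hj⟩ := mem_iUnion.mp hπ
  exact ⟨Sbar j, hSbar j, hSbarD j, hpetal j π hj⟩

theorem coreClass_eq_insert_image (K H : ℕ) :
    coreClass K H = insert (fun _ _ => false)
      ((fun h i (_ : Fin K) => decide (i = h)) '' Iio H) := by
  ext π
  simp only [coreClass, mem_insert_iff, mem_ofPred_eq, mem_image, mem_Iio, eq_comm]

theorem coreClass_finite (K H : ℕ) : (coreClass K H).Finite := by
  rw [coreClass_eq_insert_image]
  exact ((finite_Iio H).image _).insert _

theorem coreClass_ncard_le (K H : ℕ) : (coreClass K H).ncard ≤ H + 1 := by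
  rw [coreClass_eq_insert_image]
  exact (ncard_insert_le _ _).trans (Nat.succ_le_succ (ncard_image_Iio_le _ H))

theorem layer_mem_coreClass {K H h : ℕ} (hh : h < H) (a : Bool) :
    (fun i (_ : Fin K) => decide (i = h) && a) ∈ coreClass K H := by
  cases a
  · simp only [Bool.and_false]
    exact mem_insert _ _
  · simp only [Bool.and_true]
    exact mem_insert_of_mem _ ⟨h, hh, rfl⟩

theorem column_eq_image (K H : ℕ) (j : Fin (K + 1)) :
    {q : (_ : ℕ) × Fin (K + 1) | q.1 < H ∧ q.2 = j} =
      (fun h => (⟨h, j⟩ : (_ : ℕ) × Fin (K + 1))) '' Iio H := by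
  ext ⟨i, s⟩
  simp only [mem_ofPred_eq, mem_image, mem_Iio, Sigma.mk.injEq, heq_eq_eq]
  constructor
  · rintro ⟨hi, rfl⟩
    exact ⟨i, hi, rfl, rfl⟩
  · rintro ⟨i, hi, rfl, rfl⟩
    exact ⟨hi, rfl⟩

theorem column_finite (K H : ℕ) (j : Fin (K + 1)) :
    {q : (_ : ℕ) × Fin (K + 1) | q.1 < H ∧ q.2 = j}.Finite := by
  rw [column_eq_image]
  exact (finite_Iio H).image _

theorem column_ncard_le (K H : ℕ) (j : Fin (K + 1)) :
    {q : (_ : ℕ) × Fin (K + 1) | q.1 < H ∧ q.2 = j}.ncard ≤ H := by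
  rw [column_eq_image]
  exact ncard_image_Iio_le _ H

theorem isPetal_column_of_mem_colActiveClass {K H : ℕ} {j : Fin (K + 1)}
    {π : ∀ _ : ℕ, Fin (K + 1) → Bool} (hπ : π ∈ colActiveClass K j) :
    IsPetal (S := fun _ => Fin (K + 1)) H (coreClass (K + 1) H)
      {q : (_ : ℕ) × Fin (K + 1) | q.1 < H ∧ q.2 = j} π := by
  obtain ⟨b, rfl⟩ := hπ
  refine isPetal_of_forall_agree fun h h' hhh' hh'H σ havoid => ?_
  refine ⟨_, layer_mem_coreClass (hhh'.trans_lt hh'H) (if σ h = j then b h else false),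
    fun i hi hi' => ?_⟩
  rcases hi.eq_or_lt with rfl | hlt
  · simp
  · have hσi : σ i ≠ j := fun hσi => havoid i hlt hi' ⟨hi'.trans_lt hh'H, hσi⟩
    simp [hlt.ne', hσi]

theorem allActive_sunflower_general (K H : ℕ) :
    (coreClass (K + 1) H).ncard ≤ H + 1 ∧
      (∀ j : Fin (K + 1),
        Set.ncard {q : (i : ℕ) × Fin (K + 1) | q.1 < H ∧ q.2 = j} ≤ H ∧
        ∀ π ∈ colActiveClass K j,
          IsPetal (S := fun _ => Fin (K + 1)) H (coreClass (K + 1) H)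
            {q : (i : ℕ) × Fin (K + 1) | q.1 < H ∧ q.2 = j} π) ∧
      IsSunflower (S := fun _ => Fin (K + 1)) H (H + 1) H (allActiveClass K) :=
  ⟨coreClass_ncard_le _ _,
    fun j => ⟨column_ncard_le K H j, fun _ => isPetal_column_of_mem_colActiveClass⟩,
    isSunflower_iUnion _ (coreClass_finite _ _) (coreClass_ncard_le _ _) _ (column_finite K H)
      (column_ncard_le K H) fun _ _ => isPetal_column_of_mem_colActiveClass⟩

/-- The all-active class `Π_act` is an `(H+1, H)`-sunflower, witnessed by
the core `{π_0} ∪ {π_h : h ∈ [H]}` and, for every `π ∈ Π^j_act`, the petal set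
`S_π = {s_(j,h) : h ∈ [H]}` (the `j`-th column). -/
theorem allActive_sunflower (K H : ℕ) (hH : 1 ≤ H) :
    (coreClass (K + 1) H).ncard ≤ H + 1 ∧
      (∀ j : Fin (K + 1),
        Set.ncard {q : (i : ℕ) × Fin (K + 1) | q.1 < H ∧ q.2 = j} ≤ H ∧
        ∀ π ∈ colActiveClass K j,
          IsPetal (S := fun _ => Fin (K + 1)) H (coreClass (K + 1) H)
            {q : (i : ℕ) × Fin (K + 1) | q.1 < H ∧ q.2 = j} π) ∧
      IsSunflower (S := fun _ => Fin (K + 1)) H (H + 1) H (allActiveClass K) :=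
  allActive_sunflower_general K H
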